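/- Let σ = (σ₁,…,σ_n) ∈ {+1,−1}^n and let t ∈ [0,2] belong to the definition domain of the root branch φ_σ. Then: (i) q_t^n(φ_σ(t)) = 0, i.e. φ_σ(t) is a zero of the n-th iterate of q_t; (ii) −2 < φ_σ(t) < 2; and (iii) for every 1 ≤ k ≤ n−1, q_t^k(φ_σ(t)) = −φ_{(σ_{k+1},…,σ_n)}(t). -/

import Mathlib

/-- The quadratic map `q_t(x) = t - x^2`. -/
noncomputable def q (t x : ℝ) : ℝ := t - x ^ 2

/-- The root branch `φ_σ(t)` associated with a sign sequence `σ = (σ₁, …, σ_n)`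
(encoded as a list of reals, each `±1`, with head `σ₁`), defined recursively by
`φ_{[]}(t) = 0` and `φ_{σ₁ :: ρ}(t) = σ₁ · √(t + φ_ρ(t))`; thus
`φ_σ(t) = σ₁√(t + σ₂√(t + ⋯ + σ_n√t))`. -/
noncomputable def phi : List ℝ → ℝ → ℝ
  | [], _ => 0
  | s :: rest, t => s * Real.sqrt (t + phi rest t)

/-- `σ` is a sequence of signs `±1`. -/
def IsSigns (σ : List ℝ) : Prop := ∀ s ∈ σ, s = 1 ∨ s = -1

/-- `t` belongs to the definition domain of `φ_σ`: `t ≥ 0` and every radicand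
`t + φ_ρ(t)`, for `ρ` a proper suffix of `σ`, is nonnegative. -/
def InDom (σ : List ℝ) (t : ℝ) : Prop :=
  0 ≤ t ∧ ∀ ρ : List ℝ, ρ <:+ σ → ρ ≠ σ → 0 ≤ t + phi ρ t

/-- `t` is a regular point of `φ_σ`: `t` is in the definition domain and
`φ_ρ(t) ≠ 0` for every nonempty suffix `ρ` of `σ` (including `σ` itself). -/
def IsRegularPt (σ : List ℝ) (t : ℝ) : Prop :=
  InDom σ t ∧ ∀ ρ : List ℝ, ρ <:+ σ → ρ ≠ [] → phi ρ t ≠ 0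

/-! Squaring undoes the outermost root of `φ_{s :: ρ}(t)`, so `q_t` maps `φ_{s :: ρ}(t)` to
`-φ_ρ(t)`; as `q_t` is even, iterating strips one sign at a time and `q_t^n(φ_σ(t)) = -φ_{[]}(t) = 0`.
The bound holds because `√(t + x) < 2` whenever `t ≤ 2` and `|x| < 2`. -/

lemma isSigns_cons {s : ℝ} {ρ : List ℝ} : IsSigns (s :: ρ) ↔ |s| = 1 ∧ IsSigns ρ := by
  rw [IsSigns, List.forall_mem_cons, abs_eq zero_le_one]
  rfl

namespace InDom

variable {s t : ℝ} {ρ : List ℝ}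

lemma radicand_nonneg (h : InDom (s :: ρ) t) : 0 ≤ t + phi ρ t :=
  h.2 ρ (List.suffix_cons s ρ) (List.cons_ne_self s ρ).symm

lemma of_cons (h : InDom (s :: ρ) t) : InDom ρ t :=
  ⟨h.1, fun τ hτ _ => h.2 τ (hτ.trans (List.suffix_cons s ρ)) fun he =>
    absurd (he ▸ hτ.length_le) (by simp)⟩

end InDom

lemma q_neg (t x : ℝ) : q t (-x) = q t x := by
  simp [q]

lemma iterate_q_neg (t x : ℝ) (k : ℕ) : (q t)^[k + 1] (-x) = (q t)^[k + 1] x := by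
  rw [Function.iterate_succ_apply, Function.iterate_succ_apply, q_neg]

lemma q_phi_cons {s t : ℝ} (hs : |s| = 1) {ρ : List ℝ} (hρ : 0 ≤ t + phi ρ t) :
    q t (phi (s :: ρ) t) = -phi ρ t := by
  rw [q, phi, mul_pow, ← sq_abs, hs, one_pow, one_mul, Real.sq_sqrt hρ]
  ring

lemma abs_phi_lt_two {t : ℝ} (ht : t ≤ 2) {σ : List ℝ} (hσ : IsSigns σ) : |phi σ t| < 2 := by
  induction σ with
  | nil => simp [phi]
  | cons s ρ ih =>
    obtain ⟨hs, hρ⟩ := isSigns_cons.mp hσ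
    have hrad : t + phi ρ t < 2 ^ 2 := by linarith [(abs_lt.mp (ih hρ)).2]
    rw [phi, abs_mul, hs, one_mul, abs_of_nonneg (Real.sqrt_nonneg _)]
    exact (Real.sqrt_lt' two_pos).mpr hrad

lemma iterate_q_phi {t : ℝ} {σ : List ℝ} (hσ : IsSigns σ) (hdom : InDom σ t) :
    ∀ k < σ.length, (q t)^[k + 1] (phi σ t) = -phi (σ.drop (k + 1)) t := by
  induction σ with
  | nil => simp
  | cons s ρ ih =>
    obtain ⟨hs, hρ⟩ := isSigns_cons.mp hσ
    rintro (_ | k) hk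
    · simp [q_phi_cons hs hdom.radicand_nonneg]
    · rw [Function.iterate_succ_apply, q_phi_cons hs hdom.radicand_nonneg, iterate_q_neg,
        ih hρ hdom.of_cons k (by simpa using hk), List.drop_succ_cons]

theorem root_branch_is_zero_of_iterate_general
    (σ : List ℝ) (hσ : IsSigns σ)
    (t : ℝ) (ht : t ∈ Set.Icc (0 : ℝ) 2) (hdom : InDom σ t) :
    (q t)^[σ.length] (phi σ t) = 0 ∧
    (-2 < phi σ t ∧ phi σ t < 2) ∧
    (∀ k, 1 ≤ k → k ≤ σ.length - 1 →
      (q t)^[k] (phi σ t) = -phi (σ.drop k) t) := by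
  refine ⟨?_, abs_lt.mp (abs_phi_lt_two ht.2 hσ), fun k hk hkn => ?_⟩
  · cases σ with
    | nil => rfl
    | cons s ρ => simpa [phi] using iterate_q_phi hσ hdom ρ.length (by simp)
  · obtain ⟨j, rfl⟩ := Nat.exists_eq_add_of_le' hk
    exact iterate_q_phi hσ hdom j (by omega)

/-- For `σ ∈ {±1}^n` and `t ∈ [0,2]` in the definition domain of `φ_σ`:
(i) `φ_σ(t)` is a zero of `q_t^n`; (ii) `-2 < φ_σ(t) < 2`; and (iii) for every
`1 ≤ k ≤ n-1`, `q_t^k(φ_σ(t)) = -φ_{(σ_{k+1},…,σ_n)}(t)`. -/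
theorem root_branch_is_zero_of_iterate
    (σ : List ℝ) (hσ : IsSigns σ) (hne : σ ≠ [])
    (t : ℝ) (ht : t ∈ Set.Icc (0 : ℝ) 2) (hdom : InDom σ t) :
    (q t)^[σ.length] (phi σ t) = 0 ∧
    (-2 < phi σ t ∧ phi σ t < 2) ∧
    (∀ k, 1 ≤ k → k ≤ σ.length - 1 →
      (q t)^[k] (phi σ t) = -phi (σ.drop k) t) :=
  root_branch_is_zero_of_iterate_general σ hσ t ht hdom
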